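/- arXiv:2511.01540 — 5 statements merged into one kernel-verified Lean document; each statement's English description precedes it below -/
import Mathlib

section
/- Let d ≥ 1, λ > 0, and suppose f : ℝ^d → ℝ is given by f(x) = max_{1 ≤ i ≤ n} (⟨m_i, x⟩ + c_i) for vectors m_1, …, m_n ∈ ℝ^d and scalars c_1, …, c_n ∈ ℝ. Then for every x ∈ ℝ^d, the λc-transform of f satisfies f^{λc}(x) = max_{1 ≤ i ≤ n} (⟨m_i, x⟩ + c_i + ‖m_i‖²/(2λ)). -/
open Set
open scoped RealInnerProductSpace

/-!
Each affine piece `y ↦ ⟪m, y⟫ + c` is transformed separately: by Cauchy–Schwarz and AM–GM,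
`⟪m, y - x⟫ ≤ ‖m‖ ‖y - x‖ ≤ λ/2 ‖x - y‖² + ‖m‖²/(2λ)`, with equality at `y = x + λ⁻¹ m`.
The transform of a maximum is the maximum of the transforms, since the two suprema commute.
-/

theorem EReal.coe_ciSup {ι : Sort*} [Nonempty ι] {g : ι → ℝ} (hg : BddAbove (range g)) :
    ((⨆ i, g i : ℝ) : EReal) = ⨆ i, (g i : EReal) :=
  Monotone.map_ciSup_of_continuousAt continuous_coe_real_ereal.continuousAt
    EReal.coe_strictMono.monotone hg

section QuadraticPenalty

variable {E : Type*} [NormedAddCommGroup E] [InnerProductSpace ℝ E]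

theorem inner_sub_mul_norm_sub_sq_le {lam : ℝ} (hlam : 0 < lam) (m x y : E) :
    ⟪m, y⟫ - lam / 2 * ‖x - y‖ ^ 2 ≤ ⟪m, x⟫ + ‖m‖ ^ 2 / (2 * lam) := by
  have young : ‖m‖ * ‖y - x‖ ≤ lam / 2 * ‖y - x‖ ^ 2 + ‖m‖ ^ 2 / (2 * lam) := by
    have hsq : lam / 2 * ‖y - x‖ ^ 2 + ‖m‖ ^ 2 / (2 * lam) - ‖m‖ * ‖y - x‖
        = (lam * ‖y - x‖ - ‖m‖) ^ 2 / (2 * lam) := by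
      field_simp
      ring
    linarith [hsq ▸ (by positivity : 0 ≤ (lam * ‖y - x‖ - ‖m‖) ^ 2 / (2 * lam))]
  calc ⟪m, y⟫ - lam / 2 * ‖x - y‖ ^ 2
      = ⟪m, x⟫ + ⟪m, y - x⟫ - lam / 2 * ‖y - x‖ ^ 2 := by
        rw [inner_sub_right, norm_sub_rev]
        ring
    _ ≤ ⟪m, x⟫ + ‖m‖ * ‖y - x‖ - lam / 2 * ‖y - x‖ ^ 2 := by
        gcongr
        exact real_inner_le_norm _ _
    _ ≤ ⟪m, x⟫ + ‖m‖ ^ 2 / (2 * lam) := by linarith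

theorem inner_sub_mul_norm_sub_sq_at_add_inv_smul {lam : ℝ} (hlam : lam ≠ 0) (m x : E) :
    ⟪m, x + lam⁻¹ • m⟫ - lam / 2 * ‖x - (x + lam⁻¹ • m)‖ ^ 2
      = ⟪m, x⟫ + ‖m‖ ^ 2 / (2 * lam) := by
  rw [inner_add_right, real_inner_smul_right, real_inner_self_eq_norm_sq, sub_add_cancel_left,
    norm_neg, norm_smul, Real.norm_eq_abs, mul_pow, sq_abs]
  field_simp
  ring

theorem iSup_inner_add_sub_mul_norm_sub_sq {lam : ℝ} (hlam : 0 < lam) (m : E) (c : ℝ) (x : E) :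
    ⨆ y, ((⟪m, y⟫ + c - lam / 2 * ‖x - y‖ ^ 2 : ℝ) : EReal)
      = ((⟪m, x⟫ + c + ‖m‖ ^ 2 / (2 * lam) : ℝ) : EReal) := by
  apply le_antisymm
  · refine iSup_le fun y => EReal.coe_le_coe_iff.mpr ?_
    linarith [inner_sub_mul_norm_sub_sq_le hlam m x y]
  · refine le_iSup_of_le (x + lam⁻¹ • m) (EReal.coe_le_coe_iff.mpr ?_)
    linarith [inner_sub_mul_norm_sub_sq_at_add_inv_smul hlam.ne' m x]

end QuadraticPenalty

theorem lambda_c_transform_of_max_affine_general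
    {d n : ℕ} (hn : 1 ≤ n) (lam : ℝ) (hlam : 0 < lam)
    (m : Fin n → EuclideanSpace ℝ (Fin d)) (c : Fin n → ℝ)
    (f : EuclideanSpace ℝ (Fin d) → ℝ)
    (hf : ∀ x, f x = ⨆ i : Fin n, ((inner ℝ (m i) x : ℝ) + c i)) :
    ∀ x : EuclideanSpace ℝ (Fin d),
      (⨆ y : EuclideanSpace ℝ (Fin d),
          ((f y - lam / 2 * ‖x - y‖ ^ 2 : ℝ) : EReal))
        = ((⨆ i : Fin n,
            ((inner ℝ (m i) x : ℝ) + c i + ‖m i‖ ^ 2 / (2 * lam)) : ℝ) : EReal) := by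
  intro x
  have : Nonempty (Fin n) := ⟨⟨0, hn⟩⟩
  have hbdd (g : Fin n → ℝ) : BddAbove (range g) := (finite_range g).bddAbove
  calc ⨆ y, ((f y - lam / 2 * ‖x - y‖ ^ 2 : ℝ) : EReal)
      = ⨆ y, ⨆ i, ((⟪m i, y⟫ + c i - lam / 2 * ‖x - y‖ ^ 2 : ℝ) : EReal) := by
        simp_rw [hf, ciSup_sub (hbdd _), EReal.coe_ciSup (hbdd _)]
    _ = ⨆ i, ⨆ y, ((⟪m i, y⟫ + c i - lam / 2 * ‖x - y‖ ^ 2 : ℝ) : EReal) := iSup_comm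
    _ = ⨆ i, ((⟪m i, x⟫ + c i + ‖m i‖ ^ 2 / (2 * lam) : ℝ) : EReal) := by
        simp_rw [iSup_inner_add_sub_mul_norm_sub_sq hlam]
    _ = _ := (EReal.coe_ciSup (hbdd _)).symm

/-- The λc-transform (quadratic cost `c(x,y) = ½‖x-y‖²`) of a convex
piecewise-linear function `f(x) = max_i (⟨mᵢ, x⟩ + cᵢ)` on `ℝ^d` is
`max_i (⟨mᵢ, x⟩ + cᵢ + ‖mᵢ‖²/(2λ))`. -/
theorem lambda_c_transform_of_max_affine
    {d n : ℕ} (hd : 1 ≤ d) (hn : 1 ≤ n) (lam : ℝ) (hlam : 0 < lam)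
    (m : Fin n → EuclideanSpace ℝ (Fin d)) (c : Fin n → ℝ)
    (f : EuclideanSpace ℝ (Fin d) → ℝ)
    (hf : ∀ x, f x = ⨆ i : Fin n, ((inner ℝ (m i) x : ℝ) + c i)) :
    ∀ x : EuclideanSpace ℝ (Fin d),
      (⨆ y : EuclideanSpace ℝ (Fin d),
          ((f y - lam / 2 * ‖x - y‖ ^ 2 : ℝ) : EReal))
        = ((⨆ i : Fin n,
            ((inner ℝ (m i) x : ℝ) + c i + ‖m i‖ ^ 2 / (2 * lam)) : ℝ) : EReal) :=
  lambda_c_transform_of_max_affine_general hn lam hlam m c f hf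
end

section
/- Let λ > 0, k, s ∈ ℝ and α ∈ ℝ, and let f : ℝ → ℝ be given by f(x) = max{x − k, 0} + α(x − s). Then for every x ∈ ℝ, f^{λc}(x) = max{ x − (k − (2α+1)/(2λ)), 0 } + α(x − s) + α²/(2λ). -/
/-!
The payoff `max (y - k) 0 + α (y - s)` is the maximum of two affine functions of `y`, and the
transform of a maximum is the maximum of the transforms. For an affine function `a y + b` the
supremum of `a y + b - λ/2 (x - y)²` is attained at `y = x + a/λ`, with value `a x + b + a²/(2λ)`.
With slopes `1 + α` and `α`, the two values differ by `x - k + (2α + 1)/(2λ)`.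
-/

open Set

theorem IsGreatest.range_max {ι α : Type*} [LinearOrder α] {f g : ι → α} {a b : α}
    (hf : IsGreatest (range f) a) (hg : IsGreatest (range g) b) :
    IsGreatest (range fun i => max (f i) (g i)) (max a b) := by
  refine ⟨?_, ?_⟩
  · rcases le_total a b with hab | hab
    · obtain ⟨j, hj⟩ := hg.1
      have hfg : f j ≤ g j := (hf.2 ⟨j, rfl⟩).trans (hab.trans hj.ge)
      exact ⟨j, (max_eq_right hfg).trans (hj.trans (max_eq_right hab).symm)⟩
    · obtain ⟨j, hj⟩ := hf.1
      have hgf : g j ≤ f j := (hg.2 ⟨j, rfl⟩).trans (hab.trans hj.ge)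
      exact ⟨j, (max_eq_left hgf).trans (hj.trans (max_eq_left hab).symm)⟩
  · rintro _ ⟨i, rfl⟩
    exact max_le_max (hf.2 ⟨i, rfl⟩) (hg.2 ⟨i, rfl⟩)

theorem EReal.iSup_coe_eq_of_isGreatest {ι : Type*} {f : ι → ℝ} {a : ℝ}
    (h : IsGreatest (range f) a) : ⨆ i, (f i : EReal) = a := by
  have h' := EReal.coe_strictMono.monotone.map_isGreatest h
  rw [← range_comp] at h'
  exact h'.isLUB.iSup_eq

theorem isGreatest_affine_sub_sq {lam : ℝ} (hlam : 0 < lam) (a b x : ℝ) :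
    IsGreatest (range fun y => a * y + b - lam / 2 * (x - y) ^ 2)
      (a * x + b + a ^ 2 / (2 * lam)) := by
  refine ⟨⟨x + a / lam, by field_simp; ring⟩, ?_⟩
  rintro _ ⟨y, rfl⟩
  have hgap : a * x + b + a ^ 2 / (2 * lam) - (a * y + b - lam / 2 * (x - y) ^ 2)
      = (lam * (y - x) - a) ^ 2 / (2 * lam) := by
    field_simp; ring
  have : 0 ≤ (lam * (y - x) - a) ^ 2 / (2 * lam) := by positivity
  linarith

theorem isGreatest_max_affine_sub_sq {lam : ℝ} (hlam : 0 < lam) (a₁ b₁ a₂ b₂ x : ℝ) :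
    IsGreatest (range fun y => max (a₁ * y + b₁) (a₂ * y + b₂) - lam / 2 * (x - y) ^ 2)
      (max (a₁ * x + b₁ + a₁ ^ 2 / (2 * lam)) (a₂ * x + b₂ + a₂ ^ 2 / (2 * lam))) := by
  simp_rw [← max_sub_sub_right]
  exact (isGreatest_affine_sub_sq hlam a₁ b₁ x).range_max (isGreatest_affine_sub_sq hlam a₂ b₂ x)

/-- The λc-transform (quadratic cost) of
`f(x) = max (x - k) 0 + α (x - s)` is
`max (x - (k - (2α+1)/(2λ))) 0 + α (x - s) + α²/(2λ)`. -/
theorem lambda_c_transform_call_plus_linear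
    (lam k s α : ℝ) (hlam : 0 < lam) (f : ℝ → ℝ)
    (hf : ∀ x, f x = max (x - k) 0 + α * (x - s)) :
    ∀ x : ℝ,
      (⨆ y : ℝ, ((f y - lam / 2 * (x - y) ^ 2 : ℝ) : EReal))
        = ((max (x - (k - (2 * α + 1) / (2 * lam))) 0
            + α * (x - s) + α ^ 2 / (2 * lam) : ℝ) : EReal) := by
  intro x
  have hf_max : ∀ y, f y = max ((1 + α) * y + (-k - α * s)) (α * y + -(α * s)) := by
    intro y
    rw [hf, ← max_add_add_right]
    congr 1 <;> ring
  have hvalue : max (x - (k - (2 * α + 1) / (2 * lam))) 0 + α * (x - s) + α ^ 2 / (2 * lam)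
      = max ((1 + α) * x + (-k - α * s) + (1 + α) ^ 2 / (2 * lam))
          (α * x + -(α * s) + α ^ 2 / (2 * lam)) := by
    rw [add_assoc, ← max_add_add_right]
    congr 1
    · field_simp; ring
    · ring
  simp_rw [hf_max]
  rw [hvalue]
  exact EReal.iSup_coe_eq_of_isGreatest (isGreatest_max_affine_sub_sq hlam _ _ _ _ x)
end

section
/- Let λ > 0 and K ∈ ℝ, and let f : ℝ → ℝ be the straddle payoff f(x) = max{x − K, K − x, 0}. Then for every x ∈ ℝ, f^{λc}(x) = max{ x − (K − 1/(2λ)), (K + 1/(2λ)) − x, 0 }. -/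
/-! The straddle payoff is the maximum of the affine functions `y - K`, `K - y` and `0`. The
transform commutes with finite maxima, since suprema do, and the transform of an affine function
`y ↦ a * y + b` is `x ↦ a * x + b + a ^ 2 / (2 * λ)`: completing the square, the supremum is
attained at `y = x + a / λ`. -/

theorem EReal.coe_max (a b : ℝ) : ((max a b : ℝ) : EReal) = max (a : EReal) b :=
  EReal.coe_strictMono.monotone.map_max

/-- `f^{λc}(x)`, valued in `EReal` so that an unbounded supremum is `⊤` rather than a junk value. -/
noncomputable def lamCTransform (lam : ℝ) (f : ℝ → ℝ) (x : ℝ) : EReal :=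
  ⨆ y : ℝ, ((f y - lam / 2 * (x - y) ^ 2 : ℝ) : EReal)

theorem lamCTransform_max (lam : ℝ) (f g : ℝ → ℝ) (x : ℝ) :
    lamCTransform lam (fun y => max (f y) (g y)) x =
      max (lamCTransform lam f x) (lamCTransform lam g x) := by
  simp only [lamCTransform, ← max_sub_sub_right, EReal.coe_max]
  exact iSup_sup_eq

theorem affine_sub_quadratic_le {lam : ℝ} (hlam : 0 < lam) (a b x y : ℝ) :
    a * y + b - lam / 2 * (x - y) ^ 2 ≤ a * x + b + a ^ 2 / (2 * lam) := by
  have hsq : 0 ≤ (lam * (x - y) + a) ^ 2 / (2 * lam) := by positivity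
  have hexpand : (lam * (x - y) + a) ^ 2 / (2 * lam) =
      lam / 2 * (x - y) ^ 2 + a * (x - y) + a ^ 2 / (2 * lam) := by
    field_simp
    ring
  linarith

theorem affine_sub_quadratic_eq {lam : ℝ} (hlam : lam ≠ 0) (a b x : ℝ) :
    a * (x + a / lam) + b - lam / 2 * (x - (x + a / lam)) ^ 2 = a * x + b + a ^ 2 / (2 * lam) := by
  field_simp
  ring

theorem lamCTransform_affine {lam : ℝ} (hlam : 0 < lam) (a b x : ℝ) :
    lamCTransform lam (fun y => a * y + b) x = ((a * x + b + a ^ 2 / (2 * lam) : ℝ) : EReal) := by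
  apply le_antisymm
  · exact iSup_le fun y => EReal.coe_le_coe (affine_sub_quadratic_le hlam a b x y)
  · rw [← affine_sub_quadratic_eq hlam.ne' a b x]
    exact le_iSup (fun y => ((a * y + b - lam / 2 * (x - y) ^ 2 : ℝ) : EReal)) (x + a / lam)

/-- The λc-transform (quadratic cost) of the straddle payoff
`f(x) = max {x - K, K - x, 0}` is `max {x - (K - 1/(2λ)), (K + 1/(2λ)) - x, 0}`. -/
theorem lambda_c_transform_straddle
    (lam K : ℝ) (hlam : 0 < lam) (f : ℝ → ℝ)
    (hf : ∀ x, f x = max (x - K) (max (K - x) 0)) :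
    ∀ x : ℝ,
      (⨆ y : ℝ, ((f y - lam / 2 * (x - y) ^ 2 : ℝ) : EReal))
        = ((max (x - (K - 1 / (2 * lam))) (max ((K + 1 / (2 * lam)) - x) 0) : ℝ) : EReal) := by
  intro x
  have hf_affine : f = fun y => max (1 * y + -K) (max ((-1) * y + K) (0 * y + 0)) := by
    funext y
    rw [hf]
    ring_nf
  change lamCTransform lam f x = _
  rw [hf_affine, lamCTransform_max, lamCTransform_max, lamCTransform_affine hlam,
    lamCTransform_affine hlam, lamCTransform_affine hlam, ← EReal.coe_max, ← EReal.coe_max]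
  congr 2
  · ring
  · congr 1 <;> ring
end

section
/- Let ν₀ be a Borel probability measure on ℝ with finite second moment, let β ∈ (0,1), θ > 0 and k ∈ ℝ. Suppose ν₀ is atomless with a strictly increasing cumulative distribution function, and let q_β ∈ ℝ be the β-quantile of ν₀, i.e. ν₀((q_β, ∞)) = 1 − β. Then inf over λ > 0 and α ∈ ℝ of the quantity α + (1/(1−β)) ( λθ + ∫ max{ x − (k + α − 1/(2λ)), 0 } dν₀(x) ) equals (q_β − k) + (1/(1−β)) ∫ max{x − q_β, 0} dν₀(x) + √(2θ/(1−β)). -/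
/-!
For a strike `K` put `C(K) = ∫ (x - K)⁺ dν₀`. Since `(x - q)⁺ ≤ (x - K)⁺ + (K - q) 𝟙{x > q}`, the
tail mass `ν₀((q, ∞)) = 1 - β` is a subgradient of `C` at `q`, so `K ↦ K + C(K)/(1 - β)` is minimised
at the quantile `K = q` (Rockafellar–Uryasev). Substituting `K = k + α - 1/(2λ)`, the objective becomes
`K - k + C(K)/(1 - β) + (1/(2λ) + λθ/(1 - β))`; the first part is minimised at `K = q` and the second,
by AM–GM, at `λ = 1/√(2θ/(1 - β))` with value `√(2θ/(1 - β))`. Both minima are attained together.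
-/

open MeasureTheory

section CallPayoff

variable {μ : Measure ℝ}

lemma integrable_id_of_lintegral_sq_lt_top [IsFiniteMeasure μ]
    (h : ∫⁻ x, ENNReal.ofReal (x ^ 2) ∂μ < ⊤) : Integrable (fun x => x) μ := by
  have hsq : Integrable (fun x : ℝ => x ^ 2) μ := by
    refine ⟨(measurable_id.pow_const 2).aestronglyMeasurable, ?_⟩
    simpa only [HasFiniteIntegral, Real.enorm_eq_ofReal (sq_nonneg _)] using h
  exact ((memLp_two_iff_integrable_sq aestronglyMeasurable_id).2 hsq).integrable one_le_two

lemma integrable_max_sub_zero [IsFiniteMeasure μ] (hμ : Integrable (fun x => x) μ) (K : ℝ) :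
    Integrable (fun x => max (x - K) 0) μ :=
  (hμ.sub (integrable_const K)).pos_part

lemma max_sub_zero_le_max_sub_zero_add_indicator (q K x : ℝ) :
    max (x - q) 0 ≤ max (x - K) 0 + (Set.Ioi q).indicator (fun _ => K - q) x := by
  by_cases hx : q < x
  · rw [Set.indicator_of_mem (Set.mem_Ioi.2 hx), max_eq_left (by linarith)]
    linarith [le_max_left (x - K) 0]
  · rw [Set.indicator_of_notMem (show x ∉ Set.Ioi q from hx), max_eq_right (by linarith)]
    linarith [le_max_right (x - K) 0]

lemma integral_max_sub_zero_le_add_measureReal_Ioi [IsFiniteMeasure μ]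
    (hμ : Integrable (fun x => x) μ) (q K : ℝ) :
    ∫ x, max (x - q) 0 ∂μ ≤ ∫ x, max (x - K) 0 ∂μ + (K - q) * μ.real (Set.Ioi q) := by
  have hind : Integrable ((Set.Ioi q).indicator fun _ => K - q) μ :=
    (integrable_const _).indicator measurableSet_Ioi
  calc ∫ x, max (x - q) 0 ∂μ
      ≤ ∫ x, (max (x - K) 0 + (Set.Ioi q).indicator (fun _ => K - q) x) ∂μ :=
        integral_mono (integrable_max_sub_zero hμ q) ((integrable_max_sub_zero hμ K).add hind)
          (max_sub_zero_le_max_sub_zero_add_indicator q K)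
    _ = ∫ x, max (x - K) 0 ∂μ + (K - q) * μ.real (Set.Ioi q) := by
        rw [integral_add (integrable_max_sub_zero hμ K) hind,
          integral_indicator_const _ measurableSet_Ioi, smul_eq_mul, mul_comm]

lemma add_integral_max_sub_zero_div_le [IsFiniteMeasure μ] (hμ : Integrable (fun x => x) μ)
    {q : ℝ} (hq : 0 < μ.real (Set.Ioi q)) (K : ℝ) :
    q + (∫ x, max (x - q) 0 ∂μ) / μ.real (Set.Ioi q)
      ≤ K + (∫ x, max (x - K) 0 ∂μ) / μ.real (Set.Ioi q) := by
  calc q + (∫ x, max (x - q) 0 ∂μ) / μ.real (Set.Ioi q)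
      ≤ q + (∫ x, max (x - K) 0 ∂μ + (K - q) * μ.real (Set.Ioi q)) / μ.real (Set.Ioi q) := by
        gcongr
        exact integral_max_sub_zero_le_add_measureReal_Ioi hμ q K
    _ = K + (∫ x, max (x - K) 0 ∂μ) / μ.real (Set.Ioi q) := by
        field_simp
        ring

end CallPayoff

lemma sqrt_two_mul_le_inv_two_mul_add_mul {c lam : ℝ} (hc : 0 ≤ c) (hlam : 0 < lam) :
    √(2 * c) ≤ 1 / (2 * lam) + lam * c := by
  set s := √(2 * c)
  have hs : s ^ 2 = 2 * c := Real.sq_sqrt (by positivity)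
  have hsq : 1 / (2 * lam) + lam * c - s = (1 - lam * s) ^ 2 / (2 * lam) := by
    field_simp
    linear_combination -lam ^ 2 * hs
  nlinarith [div_nonneg (sq_nonneg (1 - lam * s)) (by positivity : (0 : ℝ) ≤ 2 * lam)]

lemma inv_two_mul_add_mul_eq_sqrt_two_mul {c : ℝ} (hc : 0 < c) :
    1 / (2 * (1 / √(2 * c))) + 1 / √(2 * c) * c = √(2 * c) := by
  have hs : √(2 * c) ^ 2 = 2 * c := Real.sq_sqrt (by positivity)
  have hs0 : 0 < √(2 * c) := Real.sqrt_pos.2 (by positivity)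
  field_simp
  linear_combination -hs

theorem robust_call_shortfall_first_order_general
    (ν₀ : Measure ℝ) [IsProbabilityMeasure ν₀]
    (hν₀2 : ∫⁻ x, ENNReal.ofReal (x ^ 2) ∂ν₀ < ⊤)
    (β θ k qβ : ℝ) (hβ1 : β < 1) (hθ : 0 < θ)
    (hq : ν₀ (Set.Ioi qβ) = ENNReal.ofReal (1 - β)) :
    sInf {r : ℝ | ∃ lam : ℝ, 0 < lam ∧ ∃ α : ℝ,
        r = α + 1 / (1 - β) *
          (lam * θ + ∫ x, max (x - (k + α - 1 / (2 * lam))) 0 ∂ν₀)}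
      = (qβ - k) + 1 / (1 - β) * (∫ x, max (x - qβ) 0 ∂ν₀)
        + Real.sqrt (2 * θ / (1 - β)) := by
  have h1β : 0 < 1 - β := by linarith
  have htail : ν₀.real (Set.Ioi qβ) = 1 - β := by
    rw [measureReal_def, hq, ENNReal.toReal_ofReal h1β.le]
  have hν₀ := integrable_id_of_lintegral_sq_lt_top hν₀2
  have hc : 0 < θ / (1 - β) := by positivity
  rw [mul_div_assoc 2 θ]
  refine IsLeast.csInf_eq ⟨?_, ?_⟩
  · set lam₀ := 1 / √(2 * (θ / (1 - β)))
    refine ⟨lam₀, by positivity, qβ - k + 1 / (2 * lam₀), ?_⟩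
    rw [show k + (qβ - k + 1 / (2 * lam₀)) - 1 / (2 * lam₀) = qβ by ring]
    linear_combination -inv_two_mul_add_mul_eq_sqrt_two_mul hc
  · rintro r ⟨lam, hlam, α, rfl⟩
    have hRU := add_integral_max_sub_zero_div_le hν₀ (htail ▸ h1β) (k + α - 1 / (2 * lam))
    rw [htail] at hRU
    have hAMGM := sqrt_two_mul_le_inv_two_mul_add_mul hc.le hlam
    linear_combination hRU + hAMGM

/-- First-order optimisation for the robust Expected Shortfall of a call
option: for an atomless baseline probability measure `ν₀` with strictly increasing cdf,
finite second moment, `β ∈ (0,1)`, `θ > 0`, strike `k`, and `β`-quantile `q_β`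
(`ν₀((q_β,∞)) = 1-β`), the infimum over `λ > 0` and `α ∈ ℝ` of
`α + (1/(1-β)) (λθ + ∫ (x - (k + α - 1/(2λ)))⁺ dν₀)` equals
`(q_β - k) + (1/(1-β)) ∫ (x - q_β)⁺ dν₀ + √(2θ/(1-β))`. -/
theorem robust_call_shortfall_first_order
    (ν₀ : Measure ℝ) [IsProbabilityMeasure ν₀] [NullSingletonClass ν₀]
    (hν₀2 : ∫⁻ x, ENNReal.ofReal (x ^ 2) ∂ν₀ < ⊤)
    (hcdf : StrictMono fun x : ℝ => (ν₀ (Set.Iic x)).toReal)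
    (β θ k qβ : ℝ) (hβ0 : 0 < β) (hβ1 : β < 1) (hθ : 0 < θ)
    (hq : ν₀ (Set.Ioi qβ) = ENNReal.ofReal (1 - β)) :
    sInf {r : ℝ | ∃ lam : ℝ, 0 < lam ∧ ∃ α : ℝ,
        r = α + 1 / (1 - β) *
          (lam * θ + ∫ x, max (x - (k + α - 1 / (2 * lam))) 0 ∂ν₀)}
      = (qβ - k) + 1 / (1 - β) * (∫ x, max (x - qβ) 0 ∂ν₀)
        + Real.sqrt (2 * θ / (1 - β)) :=
  robust_call_shortfall_first_order_general ν₀ hν₀2 β θ k qβ hβ1 hθ hq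
end

section
/- Let ν₀ be a Borel probability measure on ℝ with ∫ |x| dν₀(x) < ∞, which is atomless with a strictly increasing cumulative distribution function; let β ∈ (0,1) and let q_β be the β-quantile of ν₀, i.e. ν₀((q_β, ∞)) = 1 − β. For the call payoff f(x) = max{x − k, 0}, the (non-robust) Expected Shortfall ES_β^{ν₀}(f) = inf_{α ∈ ℝ} ( α + (1/(1−β)) ∫ max{f(x) − α, 0} dν₀(x) ) satisfies: if k ≤ q_β then ES_β^{ν₀}(f) = (q_β − k) + (1/(1−β)) ∫ max{x − q_β, 0} dν₀(x), and if k > q_β then ES_β^{ν₀}(f) = (1/(1−β)) ∫ max{x − k, 0} dν₀(x). -/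
/-!
Integrating `(g - α)⁺ ≥ (g - a)⁺ + (a - α) 𝟙_S`, valid for any `S` between `{g > a}` and
`{g ≥ a}`, gives a subgradient inequality for the Rockafellar–Uryasev objective
`α ↦ α + (1-β)⁻¹ ∫ (g - α)⁺` at `a`. Taking `S = {g > a}` for `α ≥ a` and `S = {g ≥ a}` for
`α ≤ a` shows that any `a` with `μ {g > a} ≤ 1 - β ≤ μ {g ≥ a}` (a `β`-quantile of `g`) is a
minimiser. For the call payoff `(x - k)⁺` such an `a` is `q_β - k` when `k ≤ q_β`, and `0`
otherwise.
-/

open MeasureTheory ENNReal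

namespace ExpectedShortfall

noncomputable def objective {Ω : Type*} [MeasurableSpace Ω] (μ : Measure Ω) (β : ℝ)
    (g : Ω → ℝ) (α : ℝ) : ℝ :=
  α + 1 / (1 - β) * ∫ x, max (g x - α) 0 ∂μ

theorem max_sub_add_indicator_le {Ω : Type*} {g : Ω → ℝ} {S : Set Ω} {a : ℝ}
    (hgt : ∀ x, a < g x → x ∈ S) (hge : ∀ x ∈ S, a ≤ g x) (α : ℝ) (x : Ω) :
    max (g x - a) 0 + (a - α) * S.indicator 1 x ≤ max (g x - α) 0 := by
  by_cases hx : x ∈ S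
  · have hax := hge x hx
    simp only [Set.indicator_of_mem hx, Pi.one_apply, mul_one, max_eq_left (sub_nonneg.2 hax)]
    exact le_max_of_le_left (by linarith)
  · have : g x ≤ a := not_lt.1 fun h => hx (hgt x h)
    simp [Set.indicator_of_notMem hx, max_eq_right (sub_nonpos.2 this)]

variable {Ω : Type*} [MeasurableSpace Ω] {μ : Measure Ω} [IsFiniteMeasure μ] {β : ℝ} {g : Ω → ℝ}

theorem integrable_max_sub (hg : Integrable g μ) (α : ℝ) :
    Integrable (fun x => max (g x - α) 0) μ :=
  (hg.sub (integrable_const α)).pos_part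

theorem objective_add_mul_le (hβ : β < 1) (hg : Integrable g μ) {S : Set Ω}
    (hS : MeasurableSet S) {a : ℝ} (hgt : ∀ x, a < g x → x ∈ S) (hge : ∀ x ∈ S, a ≤ g x)
    (α : ℝ) :
    objective μ β g a + (α - a) * (1 - μ.real S / (1 - β)) ≤ objective μ β g α := by
  have hind : Integrable (fun x => (a - α) * S.indicator 1 x) μ :=
    ((integrable_const 1).indicator hS).const_mul _
  have hint : ∫ x, max (g x - a) 0 ∂μ + (a - α) * μ.real S ≤ ∫ x, max (g x - α) 0 ∂μ := by
    rw [← integral_indicator_one hS, ← integral_const_mul,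
      ← integral_add (integrable_max_sub hg a) hind]
    exact integral_mono ((integrable_max_sub hg a).add hind) (integrable_max_sub hg α)
      (max_sub_add_indicator_le hgt hge α)
  have hc : 0 ≤ 1 / (1 - β) := by rw [one_div_nonneg]; linarith
  have hscaled := mul_le_mul_of_nonneg_left hint hc
  rw [objective, objective, div_eq_mul_one_div (μ.real S)]
  linear_combination hscaled

theorem iInf_objective_eq_of_quantile (hβ : β < 1) (hgm : Measurable g) (hg : Integrable g μ)
    {a : ℝ} (hlt : μ.real {x | a < g x} ≤ 1 - β) (hle : 1 - β ≤ μ.real {x | a ≤ g x}) :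
    ⨅ α, objective μ β g α = objective μ β g a := by
  have hβ' : 0 < 1 - β := by linarith
  have hmin : ∀ α, objective μ β g a ≤ objective μ β g α := by
    intro α
    rcases le_total a α with h | h
    · refine le_trans (le_add_of_nonneg_right (mul_nonneg (sub_nonneg.2 h) ?_))
        (objective_add_mul_le hβ hg (measurableSet_lt measurable_const hgm)
          (fun _ hx => hx) (fun _ hx => hx.le) α)
      rw [sub_nonneg, div_le_one hβ']; exact hlt
    · refine le_trans (le_add_of_nonneg_right (mul_nonneg_of_nonpos_of_nonpos (sub_nonpos.2 h) ?_))
        (objective_add_mul_le hβ hg (measurableSet_le measurable_const hgm)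
          (fun _ hx => hx.le) (fun _ hx => hx) α)
      rw [sub_nonpos, le_div_iff₀ hβ', one_mul]; exact hle
  exact le_antisymm (ciInf_le ⟨_, Set.forall_mem_range.2 hmin⟩ a) (le_ciInf hmin)

end ExpectedShortfall

theorem setOf_lt_max_sub_eq_Ioi {k a : ℝ} (ha : 0 ≤ a) :
    {x : ℝ | a < max (x - k) 0} = Set.Ioi (k + a) := by
  ext x
  simp only [Set.mem_Ioi, lt_max_iff]
  grind

theorem max_max_sub_sub {k a : ℝ} (ha : 0 ≤ a) (x : ℝ) :
    max (max (x - k) 0 - a) 0 = max (x - (k + a)) 0 := by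
  grind

open ExpectedShortfall

theorem expected_shortfall_call_general
    (ν₀ : Measure ℝ) [IsProbabilityMeasure ν₀]
    (hν₀1 : Integrable (fun x : ℝ => x) ν₀)
    (β k qβ : ℝ) (hβ0 : 0 < β) (hβ1 : β < 1)
    (hq : ν₀ (Set.Ioi qβ) = ENNReal.ofReal (1 - β))
    (f : ℝ → ℝ) (hf : ∀ x, f x = max (x - k) 0) :
    (k ≤ qβ →
      (⨅ α : ℝ, (α + 1 / (1 - β) * ∫ x, max (f x - α) 0 ∂ν₀))
        = (qβ - k) + 1 / (1 - β) * ∫ x, max (x - qβ) 0 ∂ν₀)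
    ∧ (qβ < k →
      (⨅ α : ℝ, (α + 1 / (1 - β) * ∫ x, max (f x - α) 0 ∂ν₀))
        = 1 / (1 - β) * ∫ x, max (x - k) 0 ∂ν₀) := by
  obtain rfl : f = fun x => max (x - k) 0 := funext hf
  have hfm : Measurable fun x : ℝ => max (x - k) 0 := by fun_prop
  have hfi : Integrable (fun x : ℝ => max (x - k) 0) ν₀ := integrable_max_sub hν₀1 k
  have hqβ : ν₀.real (Set.Ioi qβ) = 1 - β := by
    rw [measureReal_def, hq, toReal_ofReal (by linarith)]
  refine ⟨fun hk => ?_, fun hk => ?_⟩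
  · have ha : 0 ≤ qβ - k := sub_nonneg.2 hk
    have hlt : ν₀.real {x | qβ - k < max (x - k) 0} = 1 - β := by
      rw [setOf_lt_max_sub_eq_Ioi ha, add_sub_cancel, hqβ]
    have hle : 1 - β ≤ ν₀.real {x | qβ - k ≤ max (x - k) 0} :=
      hlt ▸ measureReal_mono (Set.ofPred_subset_ofPred.2 fun _ => le_of_lt)
    refine (iInf_objective_eq_of_quantile hβ1 hfm hfi hlt.le hle).trans ?_
    simp only [objective, max_max_sub_sub ha, add_sub_cancel]
  · have hlt : ν₀.real {x | 0 < max (x - k) 0} ≤ 1 - β := by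
      rw [setOf_lt_max_sub_eq_Ioi le_rfl, add_zero, ← hqβ]
      exact measureReal_mono (Set.Ioi_subset_Ioi hk.le)
    have hle : 1 - β ≤ ν₀.real {x : ℝ | 0 ≤ max (x - k) 0} := by
      simp only [le_max_right, Set.ofPred_true, probReal_univ]; linarith
    refine (iInf_objective_eq_of_quantile hβ1 hfm hfi hlt hle).trans ?_
    simp [objective]

/-- Non-robust Expected Shortfall of a call payoff `f(x) = (x-k)⁺` under
an atomless probability measure `ν₀` with strictly increasing cdf, `∫|x| dν₀ < ∞`,
`β ∈ (0,1)` and `β`-quantile `q_β` (`ν₀((q_β,∞)) = 1-β`):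
if `k ≤ q_β` then `ES_β^{ν₀}(f) = (q_β - k) + (1/(1-β)) ∫ (x - q_β)⁺ dν₀`, and
if `k > q_β` then `ES_β^{ν₀}(f) = (1/(1-β)) ∫ (x - k)⁺ dν₀`. -/
theorem expected_shortfall_call
    (ν₀ : Measure ℝ) [IsProbabilityMeasure ν₀] [NullSingletonClass ν₀]
    (hν₀1 : Integrable (fun x : ℝ => x) ν₀)
    (hcdf : StrictMono fun x : ℝ => (ν₀ (Set.Iic x)).toReal)
    (β k qβ : ℝ) (hβ0 : 0 < β) (hβ1 : β < 1)
    (hq : ν₀ (Set.Ioi qβ) = ENNReal.ofReal (1 - β))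
    (f : ℝ → ℝ) (hf : ∀ x, f x = max (x - k) 0) :
    (k ≤ qβ →
      (⨅ α : ℝ, (α + 1 / (1 - β) * ∫ x, max (f x - α) 0 ∂ν₀))
        = (qβ - k) + 1 / (1 - β) * ∫ x, max (x - qβ) 0 ∂ν₀)
    ∧ (qβ < k →
      (⨅ α : ℝ, (α + 1 / (1 - β) * ∫ x, max (f x - α) 0 ∂ν₀))
        = 1 / (1 - β) * ∫ x, max (x - k) 0 ∂ν₀) :=
  expected_shortfall_call_general ν₀ hν₀1 β k qβ hβ0 hβ1 hq f hf
end
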